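/- Let n > 0 be an integer with n ≡ 0 or 3 (mod 4), written as −n = D_n·f_n² with D_n a fundamental discriminant, let N be an odd squarefree positive integer, and let m be a divisor of N. Then Σ_{d | f_n, gcd(d,N)=1} μ(d)·(D_n/d)·σ_{m,N,1}(f_n/d) = (∏_{p prime, p | N/m} f_p) · (∏_{p prime, p | f_n, p ∤ N} D_p(n)). -/

import Mathlib

open scoped BigOperators

/-- The Kronecker symbol `(D/p)` at a prime `p`. -/
def kronP (D : ℤ) (p : ℕ) : ℤ :=
  if p = 2 then
    if D % 2 = 0 then 0 else if D % 8 = 1 ∨ D % 8 = 7 then 1 else -1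
  else jacobiSym D p

/-- The Kronecker symbol `(D/m)` for positive `m`: the completely multiplicative
function of `m` determined by its values at primes. -/
def kron (D : ℤ) (m : ℕ) : ℤ :=
  m.factorization.prod fun p k => kronP D p ^ k

/-- Fundamental discriminant: `1`, or squarefree `≡ 1 (mod 4)`, or `4k` with
`k ≡ 2, 3 (mod 4)` squarefree. -/
def IsFundDisc (D : ℤ) : Prop :=
  D = 1 ∨ (D % 4 = 1 ∧ Squarefree D) ∨
    ∃ k : ℤ, D = 4 * k ∧ (k % 4 = 2 ∨ k % 4 = 3) ∧ Squarefree k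

/-- The decomposition `a = D·f²` with `D` a fundamental discriminant, `f ≥ 1`. -/
noncomputable def fdpair (a : ℤ) : ℤ × ℕ := by
  classical
  exact if h : ∃ p : ℤ × ℕ, IsFundDisc p.1 ∧ 1 ≤ p.2 ∧ a = p.1 * (p.2 : ℤ) ^ 2
    then h.choose else (0, 0)

/-- `D_n`, the fundamental discriminant with `-n = D_n · f_n²`. -/
noncomputable def Dn (n : ℕ) : ℤ := (fdpair (-(n : ℤ))).1

/-- `f_n`, the conductor with `-n = D_n · f_n²`. -/
noncomputable def fn (n : ℕ) : ℕ := (fdpair (-(n : ℤ))).2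

/-- `f_p := p^(v_p f)`, the `p`-part of `f`. -/
def ppart (f p : ℕ) : ℕ := p ^ f.factorization p

/-- The weight `w(a,b,c)` in the definition of the Hurwitz class number. -/
def hurwitzW (a b c : ℤ) : ℚ :=
  if a = b ∧ b = c then 3 else if b = 0 ∧ a = c then 2 else 1

/-- The Hurwitz class number `H(n)`: `H(0) = -1/12`, and for `n > 0` the weighted
count of reduced forms of discriminant `-n` (automatically `0` for `n ≡ 1, 2 mod 4`). -/
noncomputable def hurwitz (n : ℕ) : ℚ :=
  if n = 0 then -(1 / 12)
  else
    ∑ a ∈ Finset.Icc (1 : ℤ) (n : ℤ), ∑ b ∈ Finset.Icc (-(n : ℤ)) (n : ℤ),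
      ∑ c ∈ Finset.Icc (1 : ℤ) ((n : ℤ) ^ 2 + (n : ℤ)),
        if b ^ 2 - 4 * a * c = -(n : ℤ) ∧ |b| ≤ a ∧ a ≤ c ∧ ((|b| = a ∨ a = c) → 0 ≤ b)
        then (hurwitzW a b c)⁻¹ else 0

/-- `L(0, χ_D) = -(1/|D|) Σ_{a=1}^{|D|} (D/a) a` for a fundamental discriminant `D < 0`. -/
noncomputable def Lval (D : ℤ) : ℚ :=
  -(1 / (D.natAbs : ℚ)) * ∑ a ∈ Finset.Icc 1 D.natAbs, (kron D a : ℚ) * (a : ℚ)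

/-- `L_m(0, χ_D) = L(0,χ_D) ∏_{p ∣ m} (1 - (D/p))`. -/
noncomputable def LvalM (m : ℕ) (D : ℤ) : ℚ :=
  Lval D * ∏ p ∈ m.primeFactors, (1 - (kron D p : ℚ))

/-- `σ_{m,N,1}(r) = Σ_{d ∣ r, gcd(d,m)=1, gcd(r/d, N/m)=1} d`. -/
def sigmaMN (m N r : ℕ) : ℕ :=
  ∑ d ∈ r.divisors, if Nat.gcd d m = 1 ∧ Nat.gcd (r / d) (N / m) = 1 then d else 0

/-- The Pei–Wang generalized Hurwitz class number `H_{m,N}(n)`. -/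
noncomputable def HPW (m N n : ℕ) : ℚ :=
  if n = 0 then
    if m = N then -(1 / 12) * ∏ p ∈ N.primeFactors, (1 - (p : ℚ)) else 0
  else if n % 4 = 0 ∨ n % 4 = 3 then
    LvalM m (Dn n) *
      (∏ p ∈ (N / m).primeFactors,
        (1 - (kron (Dn n) p : ℚ) / (p : ℚ)) / (1 - ((p : ℚ)⁻¹) ^ 2)) *
      ∑ a ∈ (fn n).divisors,
        if Nat.gcd a N = 1 then
          (ArithmeticFunction.moebius a : ℚ) * (kron (Dn n) a : ℚ) *
            (sigmaMN m N (fn n / a) : ℚ)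
        else 0
  else 0

/-- The Li–Skoruppa–Zhou modified class number `H^{(N₁,N₂)}(n)`. -/
noncomputable def HLSZ (N₁ N₂ n : ℕ) : ℚ :=
  if n = 0 then
    -(1 / 12) * (∏ p ∈ N₁.primeFactors, (1 - (p : ℚ))) *
      ∏ p ∈ N₂.primeFactors, ((p : ℚ) + 1)
  else if n % 4 = 0 ∨ n % 4 = 3 then
    hurwitz (n / (∏ p ∈ (N₁ * N₂).primeFactors, ppart (fn n) p) ^ 2) *
      (∏ p ∈ N₁.primeFactors, (1 - (kron (Dn n) p : ℚ))) *
      ∏ p ∈ N₂.primeFactors,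
        ((2 * (p : ℚ) * (ppart (fn n) p : ℚ) - (p : ℚ) - 1 -
            (kron (Dn n) p : ℚ) * (2 * (ppart (fn n) p : ℚ) - (p : ℚ) - 1)) /
          ((p : ℚ) - 1))
  else 0

/-- Number of distinct prime divisors, `ω(N)`. -/
def omegaN (N : ℕ) : ℕ := N.primeFactors.card

/-- The local factor `A_p(n)`, for `-n = D·f²`. -/
noncomputable def locA (D : ℤ) (f p : ℕ) : ℚ :=
  (ppart f p : ℚ) * (1 - (kron D p : ℚ) / (p : ℚ)) / (1 - ((p : ℚ)⁻¹) ^ 2)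

/-- The local factor `B_p(n)`, for `-n = D·f²`. -/
noncomputable def locB (D : ℤ) (f p : ℕ) : ℚ :=
  (2 * (p : ℚ) * (ppart f p : ℚ) - (p : ℚ) - 1 -
      (kron D p : ℚ) * (2 * (ppart f p : ℚ) - (p : ℚ) - 1)) / ((p : ℚ) - 1)

/-- The local factor `C_p(n)`, for `-n = D·f²`. -/
noncomputable def locC (D : ℤ) (p : ℕ) : ℚ := 1 - (kron D p : ℚ)

/-- The local factor `D_p(n) = σ₁(f_p) - σ₁(f_p/p)·(D/p)`, for `-n = D·f²`. -/
noncomputable def locD (D : ℤ) (f p : ℕ) : ℚ :=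
  (ArithmeticFunction.sigma 1 (ppart f p) : ℚ) -
    (ArithmeticFunction.sigma 1 (ppart f p / p) : ℚ) * (kron D p : ℚ)

/-- The character local factor `D_p(ℓ,n) = σ₁(f_p) - σ₁(f_p/p)·(D_{ℓ,n}/p)·(p/ℓ)`. -/
noncomputable def locDchar (l : ℕ) (D : ℤ) (f p : ℕ) : ℚ :=
  (ArithmeticFunction.sigma 1 (ppart f p) : ℚ) -
    (ArithmeticFunction.sigma 1 (ppart f p / p) : ℚ) * (kron D p : ℚ) *
      (jacobiSym (p : ℤ) l : ℚ)

/-- The Pei–Wang generalized class number `H(ℓ, m, N; n)` with character `χ_ℓ`. -/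
noncomputable def HPWchar (l m N n : ℕ) : ℚ := by
  classical
  exact
    if n = 0 then
      if m = N then -(1 / 12) * ∏ p ∈ N.primeFactors, (1 - (p : ℚ)) else 0
    else if (∃ q : ℤ × ℕ, IsFundDisc q.1 ∧ 1 ≤ q.2 ∧
            -(((-1 : ℤ) ^ ((l - 1) / 2)) * (n : ℤ)) = q.1 * (q.2 : ℤ) ^ 2) ∧
        (∃ q : ℤ × ℕ, IsFundDisc q.1 ∧ 1 ≤ q.2 ∧
            -((l : ℤ) * (n : ℤ)) = q.1 * (q.2 : ℤ) ^ 2) then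
      LvalM m (fdpair (-((l : ℤ) * (n : ℤ)))).1 *
        (∏ p ∈ (N / m).primeFactors,
          (1 - (kron (fdpair (-((l : ℤ) * (n : ℤ)))).1 p : ℚ) / (p : ℚ)) /
            (1 - ((p : ℚ)⁻¹) ^ 2)) *
        ((Int.gcd (l : ℤ) (fdpair (-(((-1 : ℤ) ^ ((l - 1) / 2)) * (n : ℤ)))).1 : ℚ) /
          (Nat.gcd (Int.gcd (l : ℤ) (fdpair (-(((-1 : ℤ) ^ ((l - 1) / 2)) * (n : ℤ)))).1) m : ℚ)) *
        ∑ a ∈ (fdpair (-(((-1 : ℤ) ^ ((l - 1) / 2)) * (n : ℤ)))).2.divisors,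
          if Nat.gcd a N = 1 then
            (ArithmeticFunction.moebius a : ℚ) *
              (kron (fdpair (-(((-1 : ℤ) ^ ((l - 1) / 2)) * (n : ℤ)))).1 a : ℚ) *
              (jacobiSym (a : ℤ) l : ℚ) *
              (sigmaMN m N ((fdpair (-(((-1 : ℤ) ^ ((l - 1) / 2)) * (n : ℤ)))).2 / a) : ℚ)
          else 0
    else 0

/-! The sum is the Dirichlet convolution, evaluated at `f`, of `d ↦ μ(d)(D/d)` restricted to `d`
coprime to `N` with `σ_{m,N,1} = (id restricted to (·, m) = 1) * (1 restricted to (·, N/m) = 1)`.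
Both are multiplicative, so the value is the product over `p ∣ f` of the values at `f_p = p^a`.
For `p ∣ N` the first factor is trivial on powers of `p`, and `σ_{m,N,1}(p^a)` is `p^a` or `1`
according as `p ∣ N/m` or `p ∣ m`, exactly one of which holds since `N` is squarefree. For
`p ∤ N` only `d = 1` and `d = p` contribute, giving `σ₁(p^a) - (D/p)·σ₁(p^(a-1)) = D_p(n)`. -/

open ArithmeticFunction Finset
open scoped ArithmeticFunction.Moebius ArithmeticFunction.zeta ArithmeticFunction.sigma

namespace ArithmeticFunction

variable {R : Type*}

def restrictCoprime [Zero R] (f : ArithmeticFunction R) (N : ℕ) : ArithmeticFunction R :=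
  ⟨fun d => if d.Coprime N then f d else 0, by simp⟩

section restrictCoprime

variable [Zero R] (f : ArithmeticFunction R) {N d : ℕ}

theorem restrictCoprime_apply :
    f.restrictCoprime N d = if d.Coprime N then f d else 0 := rfl

theorem restrictCoprime_apply_of_coprime (h : d.Coprime N) : f.restrictCoprime N d = f d :=
  if_pos h

theorem restrictCoprime_apply_prime_pow_of_dvd {p i : ℕ} (hp : p.Prime) (hpN : p ∣ N)
    (hi : i ≠ 0) : f.restrictCoprime N (p ^ i) = 0 :=
  if_neg fun h => hp.coprime_iff_not_dvd.mp (h.coprime_dvd_left (dvd_pow_self p hi)) hpN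

end restrictCoprime

theorem IsMultiplicative.restrictCoprime [MonoidWithZero R] {f : ArithmeticFunction R}
    (hf : f.IsMultiplicative) (N : ℕ) : (f.restrictCoprime N).IsMultiplicative := by
  refine ⟨by simp [restrictCoprime_apply, hf.map_one], fun {a b} hab => ?_⟩
  simp only [restrictCoprime_apply, Nat.coprime_mul_iff_left, hf.map_mul_of_coprime hab]
  split_ifs <;> simp_all

theorem restrictCoprime_mul_restrictCoprime_apply [Semiring R] (f g : ArithmeticFunction R)
    {m k r : ℕ} (hm : r.Coprime m) (hk : r.Coprime k) :
    (f.restrictCoprime m * g.restrictCoprime k) r = (f * g) r := by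
  simp only [mul_apply]
  refine sum_congr rfl fun x hx => ?_
  obtain ⟨hxr, -⟩ := Nat.mem_divisorsAntidiagonal.mp hx
  rw [restrictCoprime_apply_of_coprime _ (hm.coprime_dvd_left (Dvd.intro _ hxr)),
    restrictCoprime_apply_of_coprime _ (hk.coprime_dvd_left (Dvd.intro_left _ hxr))]

section PrimePow

variable [Semiring R] {p : ℕ}

theorem mul_apply_prime_pow (f g : ArithmeticFunction R) (hp : p.Prime) (a : ℕ) :
    (f * g) (p ^ a) = ∑ i ∈ range (a + 1), f (p ^ i) * g (p ^ (a - i)) := by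
  rw [mul_apply, Nat.sum_divisorsAntidiagonal (fun x y => f x * g y),
    Nat.sum_divisors_prime_pow hp]
  refine sum_congr rfl fun i hi => ?_
  rw [Nat.pow_div (Nat.lt_succ_iff.mp (mem_range.mp hi)) hp.pos]

theorem mul_apply_prime_pow_eq_right {f : ArithmeticFunction R} (g : ArithmeticFunction R)
    (hp : p.Prime) (hf1 : f 1 = 1) (hf : ∀ i ≠ 0, f (p ^ i) = 0) (a : ℕ) :
    (f * g) (p ^ a) = g (p ^ a) := by
  rw [mul_apply_prime_pow f g hp, sum_eq_single 0 (fun i _ hi => by rw [hf i hi, zero_mul])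
    (by simp), pow_zero, hf1, one_mul, Nat.sub_zero]

theorem mul_apply_prime_pow_succ {f : ArithmeticFunction R} (g : ArithmeticFunction R)
    (hp : p.Prime) (hf1 : f 1 = 1) (hf : ∀ i, 2 ≤ i → f (p ^ i) = 0) (a : ℕ) :
    (f * g) (p ^ (a + 1)) = g (p ^ (a + 1)) + f p * g (p ^ a) := by
  rw [mul_apply_prime_pow f g hp, sum_range_succ', sum_range_succ',
    sum_eq_zero fun i _ => by rw [hf (i + 1 + 1) (by omega), zero_mul]]
  simp [hf1, add_comm]

end PrimePow

end ArithmeticFunction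

theorem kron_one (D : ℤ) : kron D 1 = 1 := by simp [kron]

theorem kron_mul (D : ℤ) {a b : ℕ} (ha : a ≠ 0) (hb : b ≠ 0) :
    kron D (a * b) = kron D a * kron D b := by
  rw [kron, Nat.factorization_mul ha hb]
  exact Finsupp.prod_add_index' (fun _ => pow_zero _) fun _ _ _ => pow_add _ _ _

def moebiusKron (R : Type*) [CommRing R] (D : ℤ) : ArithmeticFunction R :=
  ⟨fun d => (μ d : R) * kron D d, by simp⟩

section moebiusKron

variable {R : Type*} [CommRing R] (D : ℤ)

theorem moebiusKron_apply (d : ℕ) : moebiusKron R D d = (μ d : R) * kron D d := rfl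

theorem isMultiplicative_moebiusKron : (moebiusKron R D).IsMultiplicative := by
  refine IsMultiplicative.iff_ne_zero.mpr ⟨by simp [moebiusKron_apply, kron_one],
    fun {a b} ha hb hab => ?_⟩
  simp only [moebiusKron_apply, isMultiplicative_moebius.map_mul_of_coprime hab,
    kron_mul D ha hb]
  push_cast
  ring

theorem moebiusKron_apply_prime {p : ℕ} (hp : p.Prime) : moebiusKron R D p = -kron D p := by
  simp [moebiusKron_apply, moebius_apply_prime hp]

theorem moebiusKron_apply_prime_pow {p i : ℕ} (hp : p.Prime) (hi : 2 ≤ i) :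
    moebiusKron R D (p ^ i) = 0 := by
  rw [moebiusKron_apply, moebius_apply_prime_pow hp (by omega), if_neg (by omega)]
  simp

end moebiusKron

def sigmaCoprime (m k : ℕ) : ArithmeticFunction ℕ :=
  (ArithmeticFunction.id.restrictCoprime m) * (ζ : ArithmeticFunction ℕ).restrictCoprime k

theorem sigmaMN_eq_sigmaCoprime (m N r : ℕ) : sigmaMN m N r = sigmaCoprime m (N / m) r := by
  rw [sigmaMN, sigmaCoprime, mul_apply, Nat.sum_divisorsAntidiagonal fun x y =>
    ArithmeticFunction.id.restrictCoprime m x * (ζ : ArithmeticFunction ℕ).restrictCoprime (N / m) y]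
  refine sum_congr rfl fun d hd => ?_
  have hrd : r / d ≠ 0 := (Nat.div_pos (Nat.divisor_le hd) (Nat.pos_of_mem_divisors hd)).ne'
  simp only [restrictCoprime_apply, id_apply, zeta_apply, if_neg hrd, Nat.Coprime, ite_and]
  split_ifs <;> simp

theorem isMultiplicative_sigmaCoprime (m k : ℕ) : (sigmaCoprime m k).IsMultiplicative :=
  (isMultiplicative_id.restrictCoprime m).mul (isMultiplicative_zeta.restrictCoprime k)

section sigmaCoprime

variable {m k : ℕ}

theorem sigmaCoprime_apply_of_coprime {r : ℕ} (hm : r.Coprime m) (hk : r.Coprime k) :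
    sigmaCoprime m k r = σ 1 r := by
  rw [sigmaCoprime, restrictCoprime_mul_restrictCoprime_apply _ _ hm hk, mul_comm,
    ← pow_one_eq_id, zeta_mul_pow_eq_sigma]

theorem sigmaCoprime_apply_prime_pow_of_dvd_right {p : ℕ} (hp : p.Prime) (hpk : p ∣ k)
    (hpm : ¬p ∣ m) (a : ℕ) : sigmaCoprime m k (p ^ a) = p ^ a := by
  rw [sigmaCoprime, mul_comm, mul_apply_prime_pow_eq_right _ hp (by simp [restrictCoprime_apply])
    fun i hi => restrictCoprime_apply_prime_pow_of_dvd _ hp hpk hi,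
    restrictCoprime_apply_of_coprime _ (Nat.Coprime.pow_left a (hp.coprime_iff_not_dvd.mpr hpm)),
    id_apply]

theorem sigmaCoprime_apply_prime_pow_of_dvd_left {p : ℕ} (hp : p.Prime) (hpm : p ∣ m)
    (hpk : ¬p ∣ k) (a : ℕ) : sigmaCoprime m k (p ^ a) = 1 := by
  rw [sigmaCoprime, mul_apply_prime_pow_eq_right _ hp (by simp [restrictCoprime_apply])
    fun i hi => restrictCoprime_apply_prime_pow_of_dvd _ hp hpm hi,
    restrictCoprime_apply_of_coprime _ (Nat.Coprime.pow_left a (hp.coprime_iff_not_dvd.mpr hpk)),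
    zeta_apply, if_neg (pow_ne_zero _ hp.ne_zero)]

end sigmaCoprime

theorem prod_primeFactors_ppart {M : Type*} [CommSemiring M] {k : ℕ} (hk : k ≠ 0) (f : ℕ) :
    ∏ p ∈ k.primeFactors, (ppart f p : M) =
      ∏ p ∈ f.primeFactors, if p ∣ k then (ppart f p : M) else 1 := by
  rw [← prod_filter]
  refine (prod_subset (fun p hp => ?_) fun p hpk hp => ?_).symm
  · obtain ⟨hpf, hpk⟩ := mem_filter.mp hp
    exact Nat.mem_primeFactors.mpr ⟨Nat.prime_of_mem_primeFactors hpf, hpk, hk⟩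
  · have hpf : p ∉ f.factorization.support := fun hpf =>
      hp (mem_filter.mpr ⟨Nat.support_factorization f ▸ hpf, Nat.dvd_of_mem_primeFactors hpk⟩)
    rw [ppart, Finsupp.notMem_support_iff.mp hpf, pow_zero, Nat.cast_one]

noncomputable def moebiusKronSigma (D : ℤ) (N m : ℕ) : ArithmeticFunction ℚ :=
  (moebiusKron ℚ D).restrictCoprime N * (sigmaCoprime m (N / m) : ArithmeticFunction ℚ)

section moebiusKronSigma

variable (D : ℤ)

theorem sum_moebius_kron_sigmaMN_eq_moebiusKronSigma (N m f : ℕ) :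
    (∑ d ∈ f.divisors, if Nat.gcd d N = 1 then
        (μ d : ℚ) * (kron D d : ℚ) * (sigmaMN m N (f / d) : ℚ) else 0) =
      moebiusKronSigma D N m f := by
  rw [moebiusKronSigma, mul_apply, Nat.sum_divisorsAntidiagonal fun x y =>
    (moebiusKron ℚ D).restrictCoprime N x * (sigmaCoprime m (N / m) : ArithmeticFunction ℚ) y]
  refine sum_congr rfl fun d _ => ?_
  simp only [restrictCoprime_apply, moebiusKron_apply, natCoe_apply, sigmaMN_eq_sigmaCoprime,
    Nat.Coprime, ite_mul, zero_mul]

theorem isMultiplicative_moebiusKronSigma (N m : ℕ) :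
    (moebiusKronSigma D N m).IsMultiplicative :=
  ((isMultiplicative_moebiusKron D).restrictCoprime N).mul
    (isMultiplicative_sigmaCoprime m (N / m)).natCast

theorem moebiusKronSigma_apply_prime_pow_of_dvd {N m p : ℕ} (hp : p.Prime) (hpN : p ∣ N)
    (a : ℕ) :
    moebiusKronSigma D N m (p ^ a) = sigmaCoprime m (N / m) (p ^ a) := by
  rw [moebiusKronSigma, mul_apply_prime_pow_eq_right _ hp
    ((isMultiplicative_moebiusKron D).restrictCoprime N).map_one
    fun i hi => restrictCoprime_apply_prime_pow_of_dvd _ hp hpN hi, natCoe_apply]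

theorem moebiusKronSigma_apply_prime_pow_succ_of_not_dvd {N m p : ℕ} (hp : p.Prime) (hm : m ∣ N)
    (hpN : ¬p ∣ N) (a : ℕ) :
    moebiusKronSigma D N m (p ^ (a + 1)) = σ 1 (p ^ (a + 1)) - σ 1 (p ^ a) * kron D p := by
  have hpN' : ∀ j, (p ^ j).Coprime N := fun j => (hp.coprime_iff_not_dvd.mpr hpN).pow_left j
  have hsigma : ∀ j, sigmaCoprime m (N / m) (p ^ j) = σ 1 (p ^ j) := fun j =>
    sigmaCoprime_apply_of_coprime ((hpN' j).coprime_dvd_right hm)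
      ((hpN' j).coprime_dvd_right (Nat.div_dvd_of_dvd hm))
  rw [moebiusKronSigma, mul_apply_prime_pow_succ _ hp
    ((isMultiplicative_moebiusKron D).restrictCoprime N).map_one
    fun i hi => by rw [restrictCoprime_apply_of_coprime _ (hpN' i),
      moebiusKron_apply_prime_pow D hp hi],
    ← pow_one p, restrictCoprime_apply_of_coprime _ (hpN' 1), pow_one,
    moebiusKron_apply_prime D hp, natCoe_apply, natCoe_apply, hsigma, hsigma]
  ring

theorem moebiusKronSigma_apply_ppart {N m : ℕ} (hNsf : Squarefree N) (hm : m ∣ N) {f p : ℕ}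
    (hp : p ∈ f.primeFactors) :
    moebiusKronSigma D N m (ppart f p) =
      (if p ∣ N / m then (ppart f p : ℚ) else 1) * (if p ∣ N then 1 else locD D f p) := by
  obtain ⟨hpp, hpf, hf0⟩ := Nat.mem_primeFactors.mp hp
  have hcop : m.Coprime (N / m) :=
    Nat.coprime_of_squarefree_mul (by rwa [Nat.mul_div_cancel' hm])
  by_cases hpN : p ∣ N
  · rw [ppart, moebiusKronSigma_apply_prime_pow_of_dvd D hpp hpN, if_pos hpN, mul_one]
    by_cases hpk : p ∣ N / m
    · rw [sigmaCoprime_apply_prime_pow_of_dvd_right hpp hpk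
        (fun hpm => hpp.not_dvd_one (hcop ▸ Nat.dvd_gcd hpm hpk)), if_pos hpk]
    · have hpm : p ∣ m := (hpp.dvd_mul.mp (by rwa [Nat.mul_div_cancel' hm])).resolve_right hpk
      rw [sigmaCoprime_apply_prime_pow_of_dvd_left hpp hpm hpk, if_neg hpk, Nat.cast_one]
  · obtain ⟨a, ha⟩ : ∃ a, f.factorization p = a + 1 :=
      Nat.exists_eq_add_one.mpr (hpp.factorization_pos_of_dvd hf0 hpf)
    have hk : ¬p ∣ N / m := fun h => hpN (h.trans (Nat.div_dvd_of_dvd hm))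
    rw [if_neg hk, if_neg hpN, one_mul, locD, ppart, ha,
      moebiusKronSigma_apply_prime_pow_succ_of_not_dvd D hpp hm hpN, pow_succ,
      Nat.mul_div_cancel _ hpp.pos]

end moebiusKronSigma

theorem moebius_sum_local_general (D : ℤ) (f : ℕ) (hf : 1 ≤ f)
    (N m : ℕ) (hNsf : Squarefree N) (hm : m ∣ N) :
    (∑ d ∈ f.divisors,
        if Nat.gcd d N = 1 then
          (ArithmeticFunction.moebius d : ℚ) * (kron D d : ℚ) *
            (sigmaMN m N (f / d) : ℚ)
        else 0) =
      (∏ p ∈ (N / m).primeFactors, (ppart f p : ℚ)) *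
        ∏ p ∈ f.primeFactors.filter fun p => ¬p ∣ N, locD D f p := by
  have hf0 : f ≠ 0 := by omega
  rw [sum_moebius_kron_sigmaMN_eq_moebiusKronSigma,
    (isMultiplicative_moebiusKronSigma D N m).multiplicative_factorization _ hf0,
    Nat.prod_factorization_eq_prod_primeFactors]
  refine (prod_congr rfl fun p hp => moebiusKronSigma_apply_ppart D hNsf hm hp).trans ?_
  rw [prod_mul_distrib, prod_primeFactors_ppart (ne_zero_of_dvd_ne_zero hNsf.ne_zero
    (Nat.div_dvd_of_dvd hm)), prod_filter]
  simp only [ite_not]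

/-- Lemma: the Möbius–Kronecker divisor sum factors into local parts. -/
theorem moebius_sum_local (n : ℕ) (hn : 0 < n) (h4 : n % 4 = 0 ∨ n % 4 = 3)
    (D : ℤ) (f : ℕ) (hD : IsFundDisc D) (hf : 1 ≤ f)
    (hDf : -(n : ℤ) = D * (f : ℤ) ^ 2)
    (N m : ℕ) (hN : 0 < N) (hNodd : Odd N) (hNsf : Squarefree N) (hm : m ∣ N) :
    (∑ d ∈ f.divisors,
        if Nat.gcd d N = 1 then
          (ArithmeticFunction.moebius d : ℚ) * (kron D d : ℚ) *
            (sigmaMN m N (f / d) : ℚ)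
        else 0) =
      (∏ p ∈ (N / m).primeFactors, (ppart f p : ℚ)) *
        ∏ p ∈ f.primeFactors.filter fun p => ¬p ∣ N, locD D f p :=
  moebius_sum_local_general D f hf N m hNsf hm
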